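/- arXiv:1710.10904 — 2 statements merged into one kernel-verified Lean document; each statement's English description precedes it below -/
import Mathlib

section
/- For any two schedules σ, π of the same job set with nonnegative weights w_j and processing times s_j and rounded times ŝ_j = ⌈λ s_j⌉ (λ > 0), if σ minimizes total weighted completion time with respect to the rounded times ŝ, then the total weighted completion time of σ with respect to the original times s is at most OPT + (n/λ)·Σ_j w_j, where OPT is the total weighted completion time of the optimal schedule π with respect to s and n is the number of jobs. -/
/-- Completion time of job `j` in schedule `τ` with processing times `t`. -/
noncomputable def compTime (n : ℕ) (τ : Equiv.Perm (Fin n)) (t : Fin n → ℝ) (j : Fin n) : ℝ :=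
  ∑ i ∈ Finset.univ.filter (fun i => τ.symm i ≤ τ.symm j), t i

/-- Total weighted completion time of schedule `τ` with times `t`. -/
noncomputable def objVal (n : ℕ) (τ : Equiv.Perm (Fin n)) (w t : Fin n → ℝ) : ℝ :=
  ∑ j : Fin n, w j * compTime n τ t j

lemma compTime_mono (n : ℕ) (τ : Equiv.Perm (Fin n)) {t t' : Fin n → ℝ}
    (h : ∀ i, t i ≤ t' i) (j : Fin n) : compTime n τ t j ≤ compTime n τ t' j :=
  Finset.sum_le_sum fun i _ => h i

lemma objVal_mono (n : ℕ) (τ : Equiv.Perm (Fin n)) {w t t' : Fin n → ℝ}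
    (hw : ∀ j, 0 ≤ w j) (h : ∀ i, t i ≤ t' i) :
    objVal n τ w t ≤ objVal n τ w t' :=
  Finset.sum_le_sum fun j _ =>
    mul_le_mul_of_nonneg_left (compTime_mono n τ h j) (hw j)

lemma compTime_smul (n : ℕ) (τ : Equiv.Perm (Fin n)) (c : ℝ) (t : Fin n → ℝ) (j : Fin n) :
    compTime n τ (fun i => c * t i) j = c * compTime n τ t j := by
  simp [compTime, Finset.mul_sum]

lemma objVal_smul (n : ℕ) (τ : Equiv.Perm (Fin n)) (c : ℝ) (w t : Fin n → ℝ) :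
    objVal n τ w (fun i => c * t i) = c * objVal n τ w t := by
  simp only [objVal, compTime_smul, Finset.mul_sum]
  exact Finset.sum_congr rfl fun j _ => by ring

lemma compTime_add_const_le (n : ℕ) (τ : Equiv.Perm (Fin n)) (c : ℝ) (hc : 0 ≤ c)
    (t : Fin n → ℝ) (j : Fin n) :
    compTime n τ (fun i => t i + c) j ≤ compTime n τ t j + n * c := by
  unfold compTime
  rw [Finset.sum_add_distrib, Finset.sum_const, nsmul_eq_mul]
  gcongr
  · have := Finset.card_le_card (Finset.filter_subset
      (fun i => τ.symm i ≤ τ.symm j) Finset.univ)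
    simpa using this

theorem rounded_optimal_error_bound (n : ℕ) (w s : Fin n → ℝ) (lam : ℝ)
    (hw : ∀ j, 0 ≤ w j) (hs : ∀ j, 0 ≤ s j) (hlam : 0 < lam)
    (A : Set (Equiv.Perm (Fin n))) (σ π : Equiv.Perm (Fin n)) (hσA : σ ∈ A) (hπA : π ∈ A)
    (hσopt : ∀ τ ∈ A, objVal n σ w (fun j => (⌈lam * s j⌉ : ℝ)) ≤
      objVal n τ w (fun j => (⌈lam * s j⌉ : ℝ)))
    (hπopt : ∀ τ ∈ A, objVal n π w s ≤ objVal n τ w s) :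
    objVal n σ w s ≤ objVal n π w s + ((n : ℝ) / lam) * ∑ j : Fin n, w j := by
  set sh : Fin n → ℝ := fun j => (⌈lam * s j⌉ : ℝ) with hsh
  have h1 : objVal n σ w s ≤ (1 / lam) * objVal n σ w sh := by
    rw [← objVal_smul]
    refine objVal_mono n σ hw fun i => ?_
    rw [div_mul_eq_mul_div, one_mul, le_div_iff₀ hlam, mul_comm]
    exact Int.le_ceil _
  have h2 : objVal n σ w sh ≤ objVal n π w sh := hσopt π hπA
  have h3 : objVal n π w sh ≤ objVal n π w (fun i => lam * s i + 1) :=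
    objVal_mono n π hw fun i => (Int.ceil_lt_add_one _).le
  have h4 : objVal n π w (fun i => lam * s i + 1) ≤
      lam * objVal n π w s + n * ∑ j : Fin n, w j := by
    have : ∀ j, compTime n π (fun i => lam * s i + 1) j ≤
        lam * compTime n π s j + n := fun j => by
      have := compTime_add_const_le n π 1 zero_le_one (fun i => lam * s i) j
      rw [compTime_smul] at this
      simpa using this
    calc objVal n π w (fun i => lam * s i + 1)
        ≤ ∑ j : Fin n, w j * (lam * compTime n π s j + n) :=
          Finset.sum_le_sum fun j _ => mul_le_mul_of_nonneg_left (this j) (hw j)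
      _ = lam * objVal n π w s + n * ∑ j : Fin n, w j := by
          simp only [objVal, mul_add, Finset.sum_add_distrib, Finset.mul_sum]
          congr 1
          · exact Finset.sum_congr rfl fun j _ => by ring
          · exact Finset.sum_congr rfl fun j _ => by ring
  calc objVal n σ w s ≤ (1 / lam) * objVal n σ w sh := h1
    _ ≤ (1 / lam) * objVal n π w sh :=
        mul_le_mul_of_nonneg_left h2 (by positivity)
    _ ≤ (1 / lam) * (lam * objVal n π w s + n * ∑ j : Fin n, w j) :=
        mul_le_mul_of_nonneg_left (h3.trans h4) (by positivity)
    _ = objVal n π w s + ((n : ℝ) / lam) * ∑ j : Fin n, w j := by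
        field_simp
end

section
/- Moving a job i that is scheduled last among a set B (all of which follow job c) to the very end of the schedule yields a feasible schedule (same number of jobs before c) in which the completion time of every other job does not increase, and the completion time of i becomes S = Σ_j s_j; if additionally C_i ≥ S − S' in the original schedule for some S' with S' ≤ εS/n and n > ε, the new weighted completion time of i is at most (1 + ε/(n−ε)) times its old weighted completion time. -/
/-!
Moving `i` to the end leaves the prefix `l₁` untouched and shifts every job of `l₂` forward by
`s i`, while `i` now finishes at `S`. If `i` already finished at `C ≥ S - S' ≥ (1 - ε/n) S`, then
`S ≤ n/(n - ε) · C = (1 + ε/(n - ε)) · C`.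
-/

variable {α : Type*} [DecidableEq α]

def complTime (s : α → ℝ) (l : List α) (j : α) : ℝ :=
  ((l.take (l.idxOf j + 1)).map s).sum

lemma complTime_append_of_mem (s : α → ℝ) {l : List α} (r : List α) {j : α} (hj : j ∈ l) :
    complTime s (l ++ r) j = complTime s l j := by
  unfold complTime
  rw [List.idxOf_append_of_mem hj,
    List.take_append_of_le_length (List.idxOf_lt_length_iff.2 hj)]

lemma complTime_append_of_notMem (s : α → ℝ) {l : List α} (r : List α) {j : α} (hj : j ∉ l) :
    complTime s (l ++ r) j = (l.map s).sum + complTime s r j := by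
  unfold complTime
  rw [List.idxOf_append_of_notMem hj, Nat.add_assoc, List.take_append, List.map_append,
    List.sum_append, List.take_of_length_le (Nat.le_add_right _ _), Nat.add_sub_cancel_left]

lemma complTime_cons_of_ne (s : α → ℝ) (r : List α) {i j : α} (hj : j ≠ i) :
    complTime s (i :: r) j = s i + complTime s r j := by
  unfold complTime
  rw [List.idxOf_cons_ne _ (Ne.symm hj)]
  simp [List.take_succ_cons]

lemma complTime_append_singleton_of_notMem (s : α → ℝ) {l : List α} {i : α} (hi : i ∉ l) :
    complTime s (l ++ [i]) i = ((l ++ [i]).map s).sum := by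
  rw [complTime_append_of_notMem s _ hi]
  simp [complTime]

lemma idxOf_move_to_end_of_mem {l₁ : List α} (l₂ : List α) (i : α) {c : α} (hc : c ∈ l₁) :
    (l₁ ++ l₂ ++ [i]).idxOf c = (l₁ ++ i :: l₂).idxOf c := by
  rw [List.append_assoc, List.idxOf_append_of_mem hc, List.idxOf_append_of_mem hc]

lemma complTime_move_to_end_le (s : α → ℝ) (l₁ : List α) {l₂ : List α} {i j : α}
    (hsi : 0 ≤ s i) (hi : i ∉ l₂) (hj : j ∈ l₁ ++ l₂) :
    complTime s (l₁ ++ l₂ ++ [i]) j ≤ complTime s (l₁ ++ i :: l₂) j := by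
  rw [List.append_assoc]
  by_cases hj₁ : j ∈ l₁
  · rw [complTime_append_of_mem s _ hj₁, complTime_append_of_mem s _ hj₁]
  · have hj₂ : j ∈ l₂ := (List.mem_append.1 hj).resolve_left hj₁
    have hji : j ≠ i := by rintro rfl; exact hi hj₂
    rw [complTime_append_of_notMem s _ hj₁, complTime_append_of_notMem s _ hj₁,
      complTime_cons_of_ne s _ hji, complTime_append_of_mem s _ hj₂]
    linarith

lemma complTime_move_to_end_self (s : α → ℝ) {l₁ l₂ : List α} {i : α} (hi : i ∉ l₁ ++ l₂) :
    complTime s (l₁ ++ l₂ ++ [i]) i = ((l₁ ++ i :: l₂).map s).sum := by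
  rw [complTime_append_singleton_of_notMem s hi]
  exact (((List.perm_append_singleton _ _).trans List.perm_middle.symm).map s).sum_eq

lemma le_one_add_div_sub_mul_of_sub_le {S S' C ε n : ℝ} (hn : 0 < n) (hεn : ε < n)
    (hS' : S' ≤ ε * S / n) (hC : S - S' ≤ C) :
    S ≤ (1 + ε / (n - ε)) * C := by
  have hnε : 0 < n - ε := sub_pos.2 hεn
  have hfactor : 1 + ε / (n - ε) = n / (n - ε) := by field_simp; ring
  have hscaled : (n - ε) * S ≤ n * C := by
    have := mul_le_mul_of_nonneg_left (hS'.trans' (by linarith : S - C ≤ S')) hn.le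
    rw [mul_div_cancel₀ _ hn.ne'] at this
    linarith
  rw [hfactor, div_mul_eq_mul_div, le_div_iff₀ hnε]
  linarith

theorem move_to_end_general (w s : α → ℝ) (hw : ∀ a, 0 ≤ w a) (hs : ∀ a, 0 ≤ s a)
    (l₁ l₂ : List α) (i c : α) (hnd : (l₁ ++ i :: l₂).Nodup) (hc : c ∈ l₁)
    (S S' ε : ℝ) (n : ℕ) (hS : S = ((l₁ ++ i :: l₂).map s).sum)
    (hε : 0 ≤ ε) (hn : ε < (n : ℝ)) (hS'le : S' ≤ ε * S / n) :
    (l₁ ++ l₂ ++ [i]).idxOf c = (l₁ ++ i :: l₂).idxOf c ∧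
    (∀ j ∈ l₁ ++ l₂, complTime s (l₁ ++ l₂ ++ [i]) j ≤ complTime s (l₁ ++ i :: l₂) j) ∧
    complTime s (l₁ ++ l₂ ++ [i]) i = S ∧
    (S - S' ≤ complTime s (l₁ ++ i :: l₂) i →
      w i * complTime s (l₁ ++ l₂ ++ [i]) i ≤
        (1 + ε / ((n : ℝ) - ε)) * (w i * complTime s (l₁ ++ i :: l₂) i)) := by
  have hi : i ∉ l₁ ++ l₂ := (List.nodup_middle.1 hnd).notMem
  have hnew : complTime s (l₁ ++ l₂ ++ [i]) i = S := by
    rw [complTime_move_to_end_self s hi, hS]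
  refine ⟨idxOf_move_to_end_of_mem l₂ i hc,
    fun j hj => complTime_move_to_end_le s l₁ (hs i) (fun h => hi (List.mem_append_right _ h)) hj,
    hnew, fun hC => ?_⟩
  rw [hnew, mul_left_comm]
  exact mul_le_mul_of_nonneg_left
    (le_one_add_div_sub_mul_of_sub_le (hε.trans_lt hn) hn hS'le hC) (hw i)

/-- Moving job `i` (which lies after job `c`) to the very end of the schedule:
the position of `c` is unchanged (feasibility), no other job's completion time
increases, the completion time of `i` becomes `S`, and if moreover
`C_i ≥ S − S'` with `S' ≤ εS/n`, the new weighted completion time of `i`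
is at most `(1 + ε/(n−ε))` times its old one. -/
theorem move_to_end (w s : α → ℝ) (hw : ∀ a, 0 ≤ w a) (hs : ∀ a, 0 ≤ s a)
    (l₁ l₂ : List α) (i c : α) (hnd : (l₁ ++ i :: l₂).Nodup) (hc : c ∈ l₁)
    (S S' ε : ℝ) (n : ℕ) (hS : S = ((l₁ ++ i :: l₂).map s).sum) (hSpos : 0 < S)
    (hS' : 0 ≤ S') (hε : 0 ≤ ε) (hn : ε < (n : ℝ)) (hS'le : S' ≤ ε * S / n) :
    (l₁ ++ l₂ ++ [i]).idxOf c = (l₁ ++ i :: l₂).idxOf c ∧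
    (∀ j ∈ l₁ ++ l₂, complTime s (l₁ ++ l₂ ++ [i]) j ≤ complTime s (l₁ ++ i :: l₂) j) ∧
    complTime s (l₁ ++ l₂ ++ [i]) i = S ∧
    (S - S' ≤ complTime s (l₁ ++ i :: l₂) i →
      w i * complTime s (l₁ ++ l₂ ++ [i]) i ≤
        (1 + ε / ((n : ℝ) - ε)) * (w i * complTime s (l₁ ++ i :: l₂) i)) :=
  move_to_end_general w s hw hs l₁ l₂ i c hnd hc S S' ε n hS hε hn hS'le
end
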